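/- Let (T0, T̃0) be a joint pair of abstract Friedrichs operators on a complex Hilbert space H. Then the graph space decomposes as W = W0 ∔ ker T1 ∔ ker T̃1, where the sums are direct, the three subspaces are pairwise [·|·]-orthogonal (i.e. [u|v] = 0 whenever u, v lie in two distinct summands), W0 ∔ ker T1 ⊆ W⁻ and W0 ∔ ker T̃1 ⊆ W⁺. Moreover, the linear projections p_k : W → ker T1 and p_k̃ : W → ker T̃1 associated with this decomposition are continuous from (W, graph norm) to (H, ‖·‖). -/

import Mathlib

open scoped InnerProductSpace
open Filter Topology LinearPMap

noncomputable section

variable {H : Type*} [NormedAddCommGroup H] [InnerProductSpace ℂ H] [CompleteSpace H]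

/-- The inner product used in the paper (antilinear in the **second** entry):
`pInner x y = ⟪y, x⟫` in Mathlib's convention. -/
def pInner {H : Type*} [NormedAddCommGroup H] [InnerProductSpace ℂ H] (x y : H) : ℂ :=
  ⟪y, x⟫_ℂ

/-- A pair of densely defined operators with common domain satisfying conditions (T1) and (T2). -/
structure IsDualPairT12 (T0 T0t : H →ₗ.[ℂ] H) (lam : ℝ) : Prop where
  dom_eq : T0.domain = T0t.domain
  dense' : Dense (T0.domain : Set H)
  sym : ∀ (φ : T0.domain) (ψ : T0t.domain), pInner (T0 φ) (ψ : H) = pInner (φ : H) (T0t ψ)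
  lam_pos : 0 < lam
  bound : ∀ (x : H) (hx : x ∈ T0.domain),
    ‖T0 ⟨x, hx⟩ + T0t ⟨x, dom_eq.le hx⟩‖ ≤ 2 * lam * ‖x‖

/-- A joint pair of abstract Friedrichs operators: (T1), (T2) and (T3). -/
structure IsFriedrichsPair (T0 T0t : H →ₗ.[ℂ] H) (lam mu : ℝ)
    extends IsDualPairT12 T0 T0t lam : Prop where
  mu_pos : 0 < mu
  coercive : ∀ (x : H) (hx : x ∈ T0.domain),
    2 * mu * ‖x‖ ^ 2 ≤ (pInner (T0 ⟨x, hx⟩ + T0t ⟨x, dom_eq.le hx⟩) x).re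

/-- The boundary form `[u|v] := ⟨T₁u , v⟩ − ⟨u , T̃₁v⟩` on the graph space
`W := dom T₁ = dom (T̃₀)*`.  The hypothesis `hW` expresses the fact `dom T₁ = dom T̃₁`. -/
def bform (T0 T0t : H →ₗ.[ℂ] H) (hW : T0t.adjoint.domain = T0.adjoint.domain)
    (u v : T0t.adjoint.domain) : ℂ :=
  pInner (T0t.adjoint u) (v : H) - pInner (u : H) (T0.adjoint ⟨(v : H), hW.le v.2⟩)

/-- `X^[⊥]`, the `[·|·]`-orthogonal complement of `X ⊆ W` in the graph space. -/
def iorth (T0 T0t : H →ₗ.[ℂ] H) (hW : T0t.adjoint.domain = T0.adjoint.domain)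
    (X : Set ↥T0t.adjoint.domain) : Set ↥T0t.adjoint.domain :=
  {u | ∀ v ∈ X, bform T0 T0t hW u v = 0}

/-- `W⁺ = {u ∈ W : [u|u] ≥ 0}`. -/
def Wplus (T0 T0t : H →ₗ.[ℂ] H) (hW : T0t.adjoint.domain = T0.adjoint.domain) :
    Set ↥T0t.adjoint.domain :=
  {u | 0 ≤ (bform T0 T0t hW u u).re}

/-- `W⁻ = {u ∈ W : [u|u] ≤ 0}`. -/
def Wminus (T0 T0t : H →ₗ.[ℂ] H) (hW : T0t.adjoint.domain = T0.adjoint.domain) :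
    Set ↥T0t.adjoint.domain :=
  {u | (bform T0 T0t hW u u).re ≤ 0}

/-- (V)-boundary conditions for a subset `V` of the graph space `W`. -/
def VBC (T0 T0t : H →ₗ.[ℂ] H) (hW : T0t.adjoint.domain = T0.adjoint.domain)
    (V : Set ↥T0t.adjoint.domain) : Prop :=
  V ⊆ Wplus T0 T0t hW ∧ iorth T0 T0t hW V ⊆ Wminus T0 T0t hW ∧
    V = iorth T0 T0t hW (iorth T0 T0t hW V)

/-- The graph norm `‖u‖_{T₁} = ‖u‖ + ‖T₁ u‖` on the graph space. -/
def gnorm (T0t : H →ₗ.[ℂ] H) (u : T0t.adjoint.domain) : ℝ :=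
  ‖(u : H)‖ + ‖T0t.adjoint u‖

/-- The distance associated with the graph norm. -/
def gdist (T0t : H →ₗ.[ℂ] H) (u v : T0t.adjoint.domain) : ℝ := gnorm T0t (u - v)

/-- Closedness (sequential) in the graph-norm topology of `W`. -/
def GClosed (T0t : H →ₗ.[ℂ] H) (X : Set ↥T0t.adjoint.domain) : Prop :=
  ∀ f : ℕ → ↥T0t.adjoint.domain, (∀ n, f n ∈ X) →
    ∀ l, Tendsto (fun n => gdist T0t (f n) l) atTop (𝓝 0) → l ∈ X

/-- `W₀` (the domain of the closure of `T₀`), viewed as a subset of the graph space `W`. -/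
def W0set (T0 T0t : H →ₗ.[ℂ] H) : Set ↥T0t.adjoint.domain :=
  {u | (u : H) ∈ T0.closure.domain}

/-- The graph inner product on `W` (in the paper's convention). -/
def gip (T0t : H →ₗ.[ℂ] H) (u v : ↥T0t.adjoint.domain) : ℂ :=
  pInner (u : H) (v : H) + pInner (T0t.adjoint u) (T0t.adjoint v)

/-- The (Hilbert) orthogonal complement of `W₀` in the graph space. -/
def W0perp (T0 T0t : H →ₗ.[ℂ] H) : Set ↥T0t.adjoint.domain :=
  {u | ∀ v : ↥T0t.adjoint.domain, (v : H) ∈ T0.closure.domain → gip T0t u v = 0}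

/-- `ker T₁` as a subset of the graph space. -/
def kerT1set (T0t : H →ₗ.[ℂ] H) : Set ↥T0t.adjoint.domain := {u | T0t.adjoint u = 0}

/-- `ker T̃₁` as a subset of the graph space. -/
def kerT1tset (T0 T0t : H →ₗ.[ℂ] H) (hW : T0t.adjoint.domain = T0.adjoint.domain) :
    Set ↥T0t.adjoint.domain :=
  {u | T0.adjoint ⟨(u : H), hW.le u.2⟩ = 0}

/-- An operator `M ∈ L(W;W')`, encoded through the pairing `m u v = ⟨Mu, v⟩_{W',W}`
(linear in `u`, antilinear in `v`, and bounded with respect to the graph norm). -/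
structure MOp (T0t : H →ₗ.[ℂ] H) where
  m : ↥T0t.adjoint.domain → ↥T0t.adjoint.domain → ℂ
  add_left : ∀ u v w, m (u + v) w = m u w + m v w
  smul_left : ∀ (c : ℂ) (u w), m (c • u) w = c * m u w
  add_right : ∀ u v w, m u (v + w) = m u v + m u w
  smul_right : ∀ (c : ℂ) (u w), m u (c • w) = starRingEnd ℂ c * m u w
  bounded : ∃ C, ∀ u v, ‖m u v‖ ≤ C * (gnorm T0t u * gnorm T0t v)

/-- The (M)-boundary conditions for a pairing `m u v = ⟨Mu, v⟩_{W',W}`: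
(M1) non-negativity and (M2) `W = ker (D − M) + ker (D + M)`. -/
def MBC (T0 T0t : H →ₗ.[ℂ] H) (hW : T0t.adjoint.domain = T0.adjoint.domain)
    (m : ↥T0t.adjoint.domain → ↥T0t.adjoint.domain → ℂ) : Prop :=
  (∀ u, 0 ≤ (m u u).re) ∧
  (∀ w : ↥T0t.adjoint.domain, ∃ a b : ↥T0t.adjoint.domain,
    (∀ v, bform T0 T0t hW a v = m a v) ∧ (∀ v, bform T0 T0t hW b v + m b v = 0) ∧ w = a + b)

/-- `ker (D − M)` for a pairing `m`. -/
def kerDsubM (T0 T0t : H →ₗ.[ℂ] H) (hW : T0t.adjoint.domain = T0.adjoint.domain)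
    (m : ↥T0t.adjoint.domain → ↥T0t.adjoint.domain → ℂ) : Set ↥T0t.adjoint.domain :=
  {u | ∀ v, bform T0 T0t hW u v = m u v}

/-- `ker (D + M)` for a pairing `m`. -/
def kerDaddM (T0 T0t : H →ₗ.[ℂ] H) (hW : T0t.adjoint.domain = T0.adjoint.domain)
    (m : ↥T0t.adjoint.domain → ↥T0t.adjoint.domain → ℂ) : Set ↥T0t.adjoint.domain :=
  {u | ∀ v, bform T0 T0t hW u v + m u v = 0}

/-!
`T₀ + T̃₀` extends to a bounded, symmetric, coercive `T̄`, and `T₁ + T̃₁ = T̄` on `W`. Hence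
`[·|·]` is hermitian, vanishes as soon as one argument lies in `W₀`, and `[u|u]` equals
`-⟨T̄u, u⟩` on `ker T₁` and `⟨T̄u, u⟩` on `ker T̃₁`; directness, orthogonality and the signs follow.

For existence: `T₀` is bounded below, so `ran T̄₀` is closed, and Lax–Milgram on
`(ran T₀)ᗮ = ker T̃₁` writes every `f ∈ H` as `T̄₀ a + T̄ c` with `c ∈ ker T̃₁`. Taking
`f = T₁ w` leaves `b = w - a - c ∈ ker T₁`.

For continuity: if `u = a + b + c`, then `[u|b] = [b|b]` and `[u|c] = [c|c]`, and coercivity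
turns `|[u|v]| ≤ (‖T₁u‖ + ‖T̄‖ ‖u‖) ‖v‖` into bounds of `‖b‖` and `‖c‖` by the graph norm of `u`.
-/

open scoped ComplexConjugate

namespace LinearPMap

section Topological

variable {R E F : Type*} [CommRing R] [AddCommGroup E] [AddCommGroup F] [Module R E] [Module R F]
  [TopologicalSpace E] [TopologicalSpace F] [ContinuousAdd E] [ContinuousAdd F]
  [TopologicalSpace R] [ContinuousSMul R E] [ContinuousSMul R F]

theorem graph_closure_subset_closure_graph (f : E →ₗ.[R] F) :
    (f.closure.graph : Set (E × F)) ⊆ _root_.closure (f.graph : Set (E × F)) := by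
  by_cases hf : f.IsClosable
  · rw [← hf.graph_closure_eq_closure_graph, Submodule.topologicalClosure_coe]
  · rw [closure_def' hf]
    exact subset_closure

theorem IsClosed.closure_le {f g : E →ₗ.[R] F} (hg : g.IsClosed) (h : f ≤ g) : f.closure ≤ g :=
  le_of_le_graph fun _ hx ↦ (hg.closure_subset_iff.2 (le_graph_of_le h))
    (f.graph_closure_subset_closure_graph hx)

end Topological

section Normed

variable {𝕜 E F : Type*} [RCLike 𝕜] [NormedAddCommGroup E] [InnerProductSpace 𝕜 E]
  [NormedAddCommGroup F] [InnerProductSpace 𝕜 F]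

theorem adjoint_isFormalAdjoint_closure [CompleteSpace E] {T : E →ₗ.[𝕜] F}
    (hT : Dense (T.domain : Set E)) : T†.IsFormalAdjoint T.closure := by
  intro y x
  have hclosed : _root_.IsClosed {p : E × F | ⟪T† y, p.1⟫_𝕜 = ⟪(y : F), p.2⟫_𝕜} :=
    isClosed_eq (continuous_const.inner continuous_fst) (continuous_const.inner continuous_snd)
  have hgraph : (T.graph : Set (E × F)) ⊆ {p | ⟪T† y, p.1⟫_𝕜 = ⟪(y : F), p.2⟫_𝕜} := by
    intro p hp
    obtain ⟨z, hz1, hz2⟩ := T.mem_graph_iff.1 hp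
    show ⟪T† y, p.1⟫_𝕜 = ⟪(y : F), p.2⟫_𝕜
    rw [← hz1, ← hz2]
    exact adjoint_isFormalAdjoint hT y z
  exact hclosed.closure_subset_iff.2 hgraph (T.graph_closure_subset_closure_graph
    (T.closure.mem_graph x))

theorem topologicalClosure_range_le_range_closure [CompleteSpace E] {f : E →ₗ.[𝕜] F}
    (hf : f.IsClosable) {K : NNReal} (hK : AntilipschitzWith K f.toFun) :
    (LinearMap.range f.toFun).topologicalClosure ≤ LinearMap.range f.closure.toFun := by
  intro y hy
  rw [← SetLike.mem_coe, Submodule.topologicalClosure_coe] at hy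
  obtain ⟨s, hs, hsy⟩ := mem_closure_iff_seq_limit.1 hy
  choose x hx using hs
  have hfx : Prod.map f.toFun f.toFun ∘ Prod.map x x = Prod.map s s := by
    ext n <;> simp [hx]
  have hx_cauchy : CauchySeq x := cauchySeq_iff_tendsto.2 <|
    (tendsto_comap_iff.2 (hfx ▸ cauchySeq_iff_tendsto.1 hsy.cauchySeq)).mono_right
      hK.comap_uniformity_le
  obtain ⟨z, hz⟩ :=
    cauchySeq_tendsto_of_complete (uniformContinuous_subtype_val.comp_cauchySeq hx_cauchy)
  have hzy : (z, y) ∈ f.closure.graph := by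
    rw [← hf.graph_closure_eq_closure_graph, ← SetLike.mem_coe, Submodule.topologicalClosure_coe]
    exact mem_closure_of_tendsto (hz.prodMk_nhds hsy)
      (Eventually.of_forall fun n ↦ hx n ▸ f.mem_graph (x n))
  obtain ⟨w, -, hw⟩ := f.closure.mem_graph_iff.1 hzy
  exact ⟨w, hw⟩

theorem mem_orthogonal_range_iff [CompleteSpace E] {T : E →ₗ.[𝕜] F}
    (hT : Dense (T.domain : Set E)) (y : F) :
    y ∈ (LinearMap.range T.toFun)ᗮ ↔ ∃ hy : y ∈ T†.domain, T† ⟨y, hy⟩ = 0 := by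
  constructor
  · intro hy
    have h : ∀ x : T.domain, ⟪(0 : E), x⟫_𝕜 = ⟪y, T x⟫_𝕜 := fun x ↦ by
      rw [inner_zero_left]
      exact ((Submodule.mem_orthogonal' _ y).1 hy _ ⟨x, rfl⟩).symm
    exact ⟨mem_adjoint_domain_of_exists y ⟨0, h⟩, adjoint_apply_eq hT _ h⟩
  · rintro ⟨hy, hy0⟩
    rw [Submodule.mem_orthogonal']
    rintro _ ⟨x, rfl⟩
    have h := adjoint_isFormalAdjoint hT ⟨y, hy⟩ x
    rwa [hy0, inner_zero_left, eq_comm] at h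

end Normed

end LinearPMap

section

variable {𝕜 E : Type*} [RCLike 𝕜] [NormedAddCommGroup E] [InnerProductSpace 𝕜 E]

theorem Submodule.exists_mem_sub_apply_mem_orthogonal (K : Submodule 𝕜 E) [CompleteSpace K]
    (A : E →L[𝕜] E) {c : ℝ} (hc : 0 < c) (hA : ∀ x, c * ‖x‖ ^ 2 ≤ RCLike.re ⟪x, A x⟫_𝕜)
    (f : E) : ∃ x ∈ K, f - A x ∈ Kᗮ := by
  lift c to NNReal using hc.le
  set S : K →L[𝕜] K := K.orthogonalProjectionOnto ∘L A ∘L K.subtypeL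
  have hS : ∀ x : K, ‖x‖ ^ 2 * c ≤ ‖⟪S x, x⟫_𝕜‖ := fun x ↦ by
    have hSx : ⟪S x, x⟫_𝕜 = ⟪A x, x⟫_𝕜 := K.inner_orthogonalProjectionOnto_eq_of_mem_right x _
    rw [hSx, ← inner_conj_symm, RCLike.norm_conj, mul_comm]
    exact (hA x).trans (RCLike.re_le_norm _)
  obtain ⟨x, hx⟩ := (ContinuousLinearMap.isUnit_iff_bijective.1 <|
    ContinuousLinearMap.isUnit_of_forall_le_norm_inner_map S (mod_cast hc) hS).2
      (K.orthogonalProjectionOnto f)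
  refine ⟨x, x.2, ?_⟩
  rw [← K.orthogonalProjectionOnto_eq_zero_iff, _root_.map_sub, ← hx]
  exact sub_self _

end

theorem mul_le_of_mul_sq_le_mul {m x y : ℝ} (hx : 0 ≤ x) (hy : 0 ≤ y)
    (h : m * x ^ 2 ≤ x * y) : m * x ≤ y := by
  rcases hx.eq_or_lt with rfl | hx
  · simpa using hy
  · exact le_of_mul_le_mul_left (by linarith) hx

section

variable {E : Type*} [NormedAddCommGroup E] [InnerProductSpace ℂ E] {T0 T0t : E →ₗ.[ℂ] E}
  {lam mu : ℝ}

theorem IsDualPairT12.isFormalAdjoint (hT : IsDualPairT12 T0 T0t lam) :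
    T0t.IsFormalAdjoint T0 :=
  fun ψ φ ↦ (hT.sym φ ψ).symm

theorem IsDualPairT12.dense_domain_right (hT : IsDualPairT12 T0 T0t lam) :
    Dense (T0t.domain : Set E) :=
  hT.dom_eq ▸ hT.dense'

theorem IsFriedrichsPair.mul_norm_le_norm_apply (hF : IsFriedrichsPair T0 T0t lam mu)
    (φ : T0.domain) : mu * ‖(φ : E)‖ ≤ ‖T0 φ‖ := by
  have hcoer : 2 * mu * ‖(φ : E)‖ ^ 2 ≤ (⟪(φ : E), T0 φ + T0t ⟨φ, hF.dom_eq.le φ.2⟩⟫_ℂ).re :=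
    hF.coercive φ φ.2
  have hsym : ⟪(φ : E), T0t ⟨φ, hF.dom_eq.le φ.2⟩⟫_ℂ = conj ⟪(φ : E), T0 φ⟫_ℂ := by
    rw [← hF.isFormalAdjoint ⟨φ, hF.dom_eq.le φ.2⟩ φ, inner_conj_symm]
  rw [inner_add_right, hsym, Complex.add_re, Complex.conj_re] at hcoer
  refine mul_le_of_mul_sq_le_mul (norm_nonneg _) (norm_nonneg _) ?_
  linarith [(Complex.re_le_norm _).trans (norm_inner_le_norm (𝕜 := ℂ) (φ : E) (T0 φ))]

end

namespace IsDualPairT12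

variable {T0 T0t : H →ₗ.[ℂ] H} {lam : ℝ} {hW : T0t†.domain = T0†.domain}

theorem le_adjoint (hT : IsDualPairT12 T0 T0t lam) : T0 ≤ T0t† :=
  hT.isFormalAdjoint.le_adjoint hT.dense_domain_right

theorem isClosable (hT : IsDualPairT12 T0 T0t lam) : T0.IsClosable :=
  (adjoint_isClosed hT.dense_domain_right).isClosable.leIsClosable hT.le_adjoint

theorem closure_le_adjoint (hT : IsDualPairT12 T0 T0t lam) : T0.closure ≤ T0t† :=
  (adjoint_isClosed hT.dense_domain_right).closure_le hT.le_adjoint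

/-- The operator `T̄ ∈ L(H)` of the paper. -/
def sumCLM (hT : IsDualPairT12 T0 T0t lam) : H →L[ℂ] H :=
  ((T0.toFun + T0t.toFun ∘ₗ Submodule.inclusion hT.dom_eq.le).mkContinuous (2 * lam)
    fun φ ↦ hT.bound φ φ.2).extend T0.domain.subtypeL

theorem sumCLM_apply (hT : IsDualPairT12 T0 T0t lam) (φ : T0.domain) :
    hT.sumCLM φ = T0 φ + T0t ⟨φ, hT.dom_eq.le φ.2⟩ :=
  ContinuousLinearMap.extend_eq _ hT.dense'.denseRange_val isometry_subtype_coe.isUniformInducing φ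

theorem sumCLM_isSymmetric (hT : IsDualPairT12 T0 T0t lam) :
    (hT.sumCLM : H →ₗ[ℂ] H).IsSymmetric := by
  set C := hT.sumCLM
  have hD : (fun p : H × H ↦ ⟪C p.1, p.2⟫_ℂ) = fun p ↦ ⟪p.1, C p.2⟫_ℂ := by
    refine Continuous.ext_on (hT.dense'.prod hT.dense') (by fun_prop) (by fun_prop) ?_
    rintro ⟨φ, ψ⟩ ⟨hφ, hψ⟩
    have h1 := hT.isFormalAdjoint ⟨φ, hT.dom_eq.le hφ⟩ ⟨ψ, hψ⟩
    have h2 := hT.isFormalAdjoint.symm ⟨φ, hφ⟩ ⟨ψ, hT.dom_eq.le hψ⟩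
    simp only [C, sumCLM_apply hT ⟨φ, hφ⟩, sumCLM_apply hT ⟨ψ, hψ⟩, inner_add_left,
      inner_add_right] at h1 h2 ⊢
    rw [h1, h2, add_comm]
  exact fun x y ↦ congrFun hD (x, y)

theorem adjoint_add_adjoint (hT : IsDualPairT12 T0 T0t lam) (u : T0t†.domain)
    (hu : (u : H) ∈ T0†.domain) : T0t† u + T0† ⟨u, hu⟩ = hT.sumCLM u := by
  refine hT.dense'.eq_of_inner_left ℂ fun φ hφ ↦ ?_
  have hC : ⟪hT.sumCLM u, φ⟫_ℂ = ⟪(u : H), hT.sumCLM φ⟫_ℂ := hT.sumCLM_isSymmetric u φ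
  rw [inner_add_left, adjoint_isFormalAdjoint hT.dense_domain_right u ⟨φ, hT.dom_eq.le hφ⟩,
    adjoint_isFormalAdjoint hT.dense' ⟨u, hu⟩ ⟨φ, hφ⟩, hC, hT.sumCLM_apply ⟨φ, hφ⟩,
    inner_add_right, add_comm]

theorem adjoint_eq_sumCLM_of_mem_kerT1set (hT : IsDualPairT12 T0 T0t lam)
    {b : T0t†.domain} (hb : b ∈ kerT1set T0t) (hb' : (b : H) ∈ T0†.domain) :
    T0† ⟨b, hb'⟩ = hT.sumCLM b := by
  rw [← hT.adjoint_add_adjoint b, show T0t† b = 0 from hb, zero_add]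

theorem adjoint_eq_sumCLM_of_mem_kerT1tset (hT : IsDualPairT12 T0 T0t lam)
    {c : T0t†.domain} (hc : c ∈ kerT1tset T0 T0t hW) : T0t† c = hT.sumCLM c := by
  rw [← hT.adjoint_add_adjoint c (hW.le c.2), show T0† ⟨c, hW.le c.2⟩ = 0 from hc, add_zero]

theorem norm_adjoint_le (hT : IsDualPairT12 T0 T0t lam) {v : T0t†.domain}
    (hv : v ∈ kerT1set T0t ∨ v ∈ kerT1tset T0 T0t hW) :
    ‖T0† ⟨v, hW.le v.2⟩‖ ≤ ‖hT.sumCLM‖ * ‖(v : H)‖ := by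
  rcases hv with hv | hv
  · rw [hT.adjoint_eq_sumCLM_of_mem_kerT1set hv]
    exact hT.sumCLM.le_opNorm v
  · rw [show T0† ⟨v, hW.le v.2⟩ = 0 from hv, norm_zero]
    positivity

end IsDualPairT12

namespace IsFriedrichsPair

variable {T0 T0t : H →ₗ.[ℂ] H} {lam mu : ℝ}

theorem coercive_sumCLM (hF : IsFriedrichsPair T0 T0t lam mu) (x : H) :
    2 * mu * ‖x‖ ^ 2 ≤ (⟪x, hF.sumCLM x⟫_ℂ).re := by
  have hclosed : IsClosed {x : H | 2 * mu * ‖x‖ ^ 2 ≤ (⟪x, hF.sumCLM x⟫_ℂ).re} :=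
    isClosed_le (by fun_prop) (by fun_prop)
  refine hclosed.closure_subset_iff.2 (fun φ hφ ↦ ?_) (hF.dense' x)
  have h := hF.coercive φ hφ
  rwa [← hF.sumCLM_apply ⟨φ, hφ⟩] at h

theorem exists_closure_add_sumCLM_eq (hF : IsFriedrichsPair T0 T0t lam mu) (f : H) :
    ∃ a, ∃ ha : a ∈ T0.closure.domain, ∃ c, ∃ hc : c ∈ T0†.domain,
      T0† ⟨c, hc⟩ = 0 ∧ T0.closure ⟨a, ha⟩ + hF.sumCLM c = f := by
  set R := LinearMap.range T0.toFun
  obtain ⟨c, hcR, hfc⟩ := Rᗮ.exists_mem_sub_apply_mem_orthogonal hF.sumCLM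
    (by linarith [hF.mu_pos]) hF.coercive_sumCLM f
  rw [R.orthogonal_orthogonal_eq_closure] at hfc
  have hanti : AntilipschitzWith ⟨mu⁻¹, inv_nonneg.2 hF.mu_pos.le⟩ T0.toFun :=
    AddMonoidHomClass.antilipschitz_of_bound _ fun φ ↦
      (le_inv_mul_iff₀ hF.mu_pos).2 (hF.mul_norm_le_norm_apply φ)
  obtain ⟨⟨a, ha⟩, hac⟩ := topologicalClosure_range_le_range_closure hF.isClosable hanti hfc
  obtain ⟨hc, hc0⟩ := (mem_orthogonal_range_iff hF.dense' c).1 hcR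
  exact ⟨a, ha, c, hc, hc0, eq_sub_iff_add_eq.1 hac⟩

end IsFriedrichsPair

section BoundaryForm

variable {T0 T0t : H →ₗ.[ℂ] H} {lam mu : ℝ} {hW : T0t†.domain = T0†.domain}

theorem bform_add_left (u v w : T0t†.domain) :
    bform T0 T0t hW (u + v) w = bform T0 T0t hW u w + bform T0 T0t hW v w := by
  simp only [bform, pInner, LinearPMap.map_add, Submodule.coe_add, inner_add_right]
  ring

theorem norm_bform_le (u v : T0t†.domain) :
    ‖bform T0 T0t hW u v‖ ≤ ‖T0t† u‖ * ‖(v : H)‖ + ‖(u : H)‖ * ‖T0† ⟨v, hW.le v.2⟩‖ := by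
  refine (norm_sub_le _ _).trans (add_le_add ?_ ?_) <;>
    rw [pInner, mul_comm] <;> exact norm_inner_le_norm _ _

theorem conj_bform (hT : IsDualPairT12 T0 T0t lam) (u v : T0t†.domain) :
    conj (bform T0 T0t hW v u) = bform T0 T0t hW u v := by
  have hC : ⟪hT.sumCLM v, (u : H)⟫_ℂ = ⟪(v : H), hT.sumCLM u⟫_ℂ := hT.sumCLM_isSymmetric v u
  rw [← hT.adjoint_add_adjoint u (hW.le u.2), ← hT.adjoint_add_adjoint v (hW.le v.2),
    inner_add_left, inner_add_right] at hC
  simp only [bform, pInner, _root_.map_sub, inner_conj_symm]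
  linear_combination hC

theorem bform_eq_zero_of_mem_W0set (hT : IsDualPairT12 T0 T0t lam) {a : T0t†.domain}
    (ha : a ∈ W0set T0 T0t) (v : T0t†.domain) : bform T0 T0t hW a v = 0 := by
  have hT1 : T0.closure ⟨a, ha⟩ = T0t† a := hT.closure_le_adjoint.2 rfl
  have hpair : ⟪T0† ⟨v, hW.le v.2⟩, (a : H)⟫_ℂ = ⟪(v : H), T0t† a⟫_ℂ := by
    rw [← hT1]
    exact adjoint_isFormalAdjoint_closure hT.dense' ⟨v, hW.le v.2⟩ ⟨a, ha⟩
  rw [bform, pInner, pInner, hpair, sub_self]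

theorem bform_eq_zero_of_mem_W0set_right (hT : IsDualPairT12 T0 T0t lam) {a : T0t†.domain}
    (ha : a ∈ W0set T0 T0t) (v : T0t†.domain) : bform T0 T0t hW v a = 0 := by
  rw [← conj_bform hT, bform_eq_zero_of_mem_W0set hT ha, _root_.map_zero]

theorem bform_eq_zero_of_mem_kerT1set_of_mem_kerT1tset {b c : T0t†.domain}
    (hb : b ∈ kerT1set T0t) (hc : c ∈ kerT1tset T0 T0t hW) : bform T0 T0t hW b c = 0 := by
  rw [bform, pInner, pInner, show T0t† b = 0 from hb, show T0† ⟨c, hW.le c.2⟩ = 0 from hc,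
    inner_zero_left, inner_zero_right, sub_zero]

theorem bform_eq_zero_of_mem_kerT1tset_of_mem_kerT1set (hT : IsDualPairT12 T0 T0t lam)
    {b c : T0t†.domain} (hc : c ∈ kerT1tset T0 T0t hW) (hb : b ∈ kerT1set T0t) :
    bform T0 T0t hW c b = 0 := by
  rw [← conj_bform hT, bform_eq_zero_of_mem_kerT1set_of_mem_kerT1tset hb hc, _root_.map_zero]

theorem bform_add_self_of_mem_W0set (hT : IsDualPairT12 T0 T0t lam) {a : T0t†.domain}
    (ha : a ∈ W0set T0 T0t) (u : T0t†.domain) :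
    bform T0 T0t hW (a + u) (a + u) = bform T0 T0t hW u u := by
  rw [bform_add_left, bform_eq_zero_of_mem_W0set hT ha, zero_add, ← conj_bform hT,
    bform_add_left, bform_eq_zero_of_mem_W0set hT ha, zero_add, conj_bform hT]

theorem bform_decomposition_kerT1 (hT : IsDualPairT12 T0 T0t lam) {a b c : T0t†.domain}
    (ha : a ∈ W0set T0 T0t) (hb : b ∈ kerT1set T0t) (hc : c ∈ kerT1tset T0 T0t hW) :
    bform T0 T0t hW (a + b + c) b = bform T0 T0t hW b b := by
  rw [bform_add_left, bform_add_left, bform_eq_zero_of_mem_W0set hT ha,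
    bform_eq_zero_of_mem_kerT1tset_of_mem_kerT1set hT hc hb, zero_add, add_zero]

theorem bform_decomposition_kerT1t (hT : IsDualPairT12 T0 T0t lam) {a b c : T0t†.domain}
    (ha : a ∈ W0set T0 T0t) (hb : b ∈ kerT1set T0t) (hc : c ∈ kerT1tset T0 T0t hW) :
    bform T0 T0t hW (a + b + c) c = bform T0 T0t hW c c := by
  rw [bform_add_left, bform_add_left, bform_eq_zero_of_mem_W0set hT ha,
    bform_eq_zero_of_mem_kerT1set_of_mem_kerT1tset hb hc, zero_add, zero_add]

theorem re_bform_self_le_of_mem_kerT1set (hF : IsFriedrichsPair T0 T0t lam mu)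
    {b : T0t†.domain} (hb : b ∈ kerT1set T0t) :
    (bform T0 T0t hW b b).re ≤ -(2 * mu * ‖(b : H)‖ ^ 2) := by
  rw [bform, pInner, pInner, show T0t† b = 0 from hb, inner_zero_right, zero_sub,
    hF.adjoint_eq_sumCLM_of_mem_kerT1set hb, ← inner_conj_symm (hF.sumCLM b) (b : H),
    Complex.neg_re, Complex.conj_re, neg_le_neg_iff]
  exact hF.coercive_sumCLM b

theorem le_re_bform_self_of_mem_kerT1tset (hF : IsFriedrichsPair T0 T0t lam mu)
    {c : T0t†.domain} (hc : c ∈ kerT1tset T0 T0t hW) :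
    2 * mu * ‖(c : H)‖ ^ 2 ≤ (bform T0 T0t hW c c).re := by
  rw [bform, pInner, pInner, show T0† ⟨c, hW.le c.2⟩ = 0 from hc, inner_zero_left, sub_zero,
    hF.adjoint_eq_sumCLM_of_mem_kerT1tset hc]
  exact hF.coercive_sumCLM c

end BoundaryForm

section Decomposition

variable {T0 T0t : H →ₗ.[ℂ] H} {lam mu : ℝ} {hW : T0t†.domain = T0†.domain}

theorem mul_sq_norm_le_norm_bform_self (hF : IsFriedrichsPair T0 T0t lam mu)
    {v : T0t†.domain} (hv : v ∈ kerT1set T0t ∨ v ∈ kerT1tset T0 T0t hW) :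
    2 * mu * ‖(v : H)‖ ^ 2 ≤ ‖bform T0 T0t hW v v‖ := by
  set z := bform T0 T0t hW v v
  have hre := Complex.abs_re_le_norm z
  rcases hv with hv | hv
  · linarith [re_bform_self_le_of_mem_kerT1set (hW := hW) hF hv, neg_abs_le z.re]
  · linarith [le_re_bform_self_of_mem_kerT1tset (hW := hW) hF hv, le_abs_self z.re]

theorem eq_zero_of_bform_self_eq_zero (hF : IsFriedrichsPair T0 T0t lam mu)
    {v : T0t†.domain} (hv : v ∈ kerT1set T0t ∨ v ∈ kerT1tset T0 T0t hW)
    (h : bform T0 T0t hW v v = 0) : v = 0 := by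
  have hle := mul_sq_norm_le_norm_bform_self hF hv
  rw [h, norm_zero] at hle
  have hsq : ‖(v : H)‖ ^ 2 ≤ 0 := nonpos_of_mul_nonpos_right hle (by linarith [hF.mu_pos])
  exact Subtype.ext (norm_eq_zero.1 ((sq_nonpos_iff _).1 hsq))

theorem norm_le_of_bform_eq_bform_self (hF : IsFriedrichsPair T0 T0t lam mu)
    {u v : T0t†.domain} (hv : v ∈ kerT1set T0t ∨ v ∈ kerT1tset T0 T0t hW)
    (huv : bform T0 T0t hW u v = bform T0 T0t hW v v) :
    ‖(v : H)‖ ≤ (2 * mu)⁻¹ * (1 + ‖hF.sumCLM‖) * gnorm T0t u := by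
  rw [mul_assoc, le_inv_mul_iff₀ (by linarith [hF.mu_pos])]
  refine mul_le_of_mul_sq_le_mul (norm_nonneg _) (by unfold gnorm; positivity) ?_
  calc 2 * mu * ‖(v : H)‖ ^ 2 ≤ ‖bform T0 T0t hW u v‖ :=
        huv ▸ mul_sq_norm_le_norm_bform_self hF hv
    _ ≤ ‖T0t† u‖ * ‖(v : H)‖ + ‖(u : H)‖ * (‖hF.sumCLM‖ * ‖(v : H)‖) :=
      (norm_bform_le u v).trans (by gcongr; exact hF.norm_adjoint_le hv)
    _ ≤ ‖(v : H)‖ * ((1 + ‖hF.sumCLM‖) * gnorm T0t u) := by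
      unfold gnorm
      have hv := norm_nonneg (v : H)
      nlinarith [mul_nonneg hv (norm_nonneg (u : H)),
        mul_nonneg (mul_nonneg hv (norm_nonneg hF.sumCLM)) (norm_nonneg (T0t† u))]

theorem exists_add_add_eq (hF : IsFriedrichsPair T0 T0t lam mu) (w : T0t†.domain) :
    ∃ a ∈ W0set T0 T0t, ∃ b ∈ kerT1set T0t, ∃ c ∈ kerT1tset T0 T0t hW, w = a + b + c := by
  obtain ⟨a, ha, c, hc, hc0, hac⟩ := hF.exists_closure_add_sumCLM_eq (T0t† w)
  set a' : T0t†.domain := ⟨a, hF.closure_le_adjoint.1 ha⟩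
  set c' : T0t†.domain := ⟨c, hW.ge hc⟩
  have hc' : c' ∈ kerT1tset T0 T0t hW := hc0
  have ha' : T0t† a' = T0.closure ⟨a, ha⟩ := (hF.closure_le_adjoint.2 rfl).symm
  refine ⟨a', ha, w - a' - c', ?_, c', hc', by abel⟩
  show T0t† (w - a' - c') = 0
  rw [LinearPMap.map_sub, LinearPMap.map_sub, ha', hF.adjoint_eq_sumCLM_of_mem_kerT1tset hc',
    ← hac]
  abel

theorem eq_zero_of_add_add_eq_zero (hF : IsFriedrichsPair T0 T0t lam mu) {a b c : T0t†.domain}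
    (ha : a ∈ W0set T0 T0t) (hb : b ∈ kerT1set T0t) (hc : c ∈ kerT1tset T0 T0t hW)
    (h : a + b + c = 0) : a = 0 ∧ b = 0 ∧ c = 0 := by
  have h0 : ∀ v, bform T0 T0t hW (a + b + c) v = 0 := fun v ↦ by
    rw [h]
    exact bform_eq_zero_of_mem_W0set hF.toIsDualPairT12 (zero_mem T0.closure.domain) v
  have hb0 : b = 0 := eq_zero_of_bform_self_eq_zero hF (.inl hb) <| by
    rw [← bform_decomposition_kerT1 hF.toIsDualPairT12 ha hb hc, h0]
  have hc0 : c = 0 := eq_zero_of_bform_self_eq_zero hF (.inr hc) <| by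
    rw [← bform_decomposition_kerT1t hF.toIsDualPairT12 ha hb hc, h0]
  subst hb0 hc0
  exact ⟨by simpa using h, rfl, rfl⟩

theorem norm_le_of_sub_sub_mem_W0set (hF : IsFriedrichsPair T0 T0t lam mu)
    {u b c : T0t†.domain} (hb : b ∈ kerT1set T0t) (hc : c ∈ kerT1tset T0 T0t hW)
    (ha : u - b - c ∈ W0set T0 T0t) :
    ‖(b : H)‖ ≤ (2 * mu)⁻¹ * (1 + ‖hF.sumCLM‖) * gnorm T0t u ∧
      ‖(c : H)‖ ≤ (2 * mu)⁻¹ * (1 + ‖hF.sumCLM‖) * gnorm T0t u := by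
  obtain ⟨a, ha', rfl⟩ : ∃ a ∈ W0set T0 T0t, u = a + b + c := ⟨u - b - c, ha, by abel⟩
  exact ⟨norm_le_of_bform_eq_bform_self hF (.inl hb)
      (bform_decomposition_kerT1 hF.toIsDualPairT12 ha' hb hc),
    norm_le_of_bform_eq_bform_self hF (.inr hc)
      (bform_decomposition_kerT1t hF.toIsDualPairT12 ha' hb hc)⟩

end Decomposition

/-- Theorem 2.3 (ix): `W = W₀ ∔ ker T₁ ∔ ker T̃₁`, the summands are pairwise
`[·|·]`-orthogonal, `W₀ ∔ ker T₁ ⊆ W⁻`, `W₀ ∔ ker T̃₁ ⊆ W⁺`, and the associated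
projections onto `ker T₁` and `ker T̃₁` are graph-norm-to-`H` continuous. -/
theorem graph_space_von_neumann_decomposition
    (T0 T0t : H →ₗ.[ℂ] H) (lam mu : ℝ) (hF : IsFriedrichsPair T0 T0t lam mu)
    (hW : T0t.adjoint.domain = T0.adjoint.domain) :
    (∀ w : ↥T0t.adjoint.domain, ∃ a ∈ W0set T0 T0t, ∃ b ∈ kerT1set T0t,
      ∃ c ∈ kerT1tset T0 T0t hW, w = a + b + c) ∧
    (∀ a ∈ W0set T0 T0t, ∀ b ∈ kerT1set T0t, ∀ c ∈ kerT1tset T0 T0t hW,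
      a + b + c = 0 → a = 0 ∧ b = 0 ∧ c = 0) ∧
    (∀ u v : ↥T0t.adjoint.domain,
      ((u ∈ W0set T0 T0t ∧ v ∈ kerT1set T0t) ∨ (u ∈ kerT1set T0t ∧ v ∈ W0set T0 T0t) ∨
       (u ∈ W0set T0 T0t ∧ v ∈ kerT1tset T0 T0t hW) ∨
       (u ∈ kerT1tset T0 T0t hW ∧ v ∈ W0set T0 T0t) ∨
       (u ∈ kerT1set T0t ∧ v ∈ kerT1tset T0 T0t hW) ∨
       (u ∈ kerT1tset T0 T0t hW ∧ v ∈ kerT1set T0t)) →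
      bform T0 T0t hW u v = 0) ∧
    (∀ a ∈ W0set T0 T0t, ∀ b ∈ kerT1set T0t,
      (bform T0 T0t hW (a + b) (a + b)).re ≤ 0) ∧
    (∀ a ∈ W0set T0 T0t, ∀ c ∈ kerT1tset T0 T0t hW,
      0 ≤ (bform T0 T0t hW (a + c) (a + c)).re) ∧
    (∀ pk pkt : ↥T0t.adjoint.domain →ₗ[ℂ] ↥T0t.adjoint.domain,
      (∀ u, pk u ∈ kerT1set T0t ∧ pkt u ∈ kerT1tset T0 T0t hW ∧
        u - pk u - pkt u ∈ W0set T0 T0t) →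
      (∃ C, ∀ u, ‖(pk u : H)‖ ≤ C * gnorm T0t u) ∧
      (∃ C, ∀ u, ‖(pkt u : H)‖ ≤ C * gnorm T0t u)) := by
  have hT := hF.toIsDualPairT12
  refine ⟨exists_add_add_eq hF, fun a ha b hb c hc ↦ eq_zero_of_add_add_eq_zero hF ha hb hc,
    ?_, fun a ha b hb ↦ ?_, fun a ha c hc ↦ ?_, fun pk pkt hp ↦ ?_⟩
  · rintro u v (⟨hu, -⟩ | ⟨-, hv⟩ | ⟨hu, -⟩ | ⟨-, hv⟩ | ⟨hu, hv⟩ | ⟨hu, hv⟩)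
    · exact bform_eq_zero_of_mem_W0set hT hu v
    · exact bform_eq_zero_of_mem_W0set_right hT hv u
    · exact bform_eq_zero_of_mem_W0set hT hu v
    · exact bform_eq_zero_of_mem_W0set_right hT hv u
    · exact bform_eq_zero_of_mem_kerT1set_of_mem_kerT1tset hu hv
    · exact bform_eq_zero_of_mem_kerT1tset_of_mem_kerT1set hT hu hv
  · rw [bform_add_self_of_mem_W0set hT ha]
    nlinarith [re_bform_self_le_of_mem_kerT1set (hW := hW) hF hb, hF.mu_pos, sq_nonneg ‖(b : H)‖]
  · rw [bform_add_self_of_mem_W0set hT ha]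
    nlinarith [le_re_bform_self_of_mem_kerT1tset hF hc, hF.mu_pos, sq_nonneg ‖(c : H)‖]
  · have hbound u := norm_le_of_sub_sub_mem_W0set hF (hp u).1 (hp u).2.1 (hp u).2.2
    exact ⟨⟨_, fun u ↦ (hbound u).1⟩, ⟨_, fun u ↦ (hbound u).2⟩⟩
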